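/- Let A ∈ (ℝ ∪ {−∞})^{n×n} have spectral radius λ > −∞. Then the minimum of x⁻ A x over all regular vectors x ∈ ℝⁿ equals λ, and a regular vector x attains this minimum if and only if x = (λ⁻¹ A)* u for some vector u ∈ (ℝ ∪ {−∞})ⁿ, where λ⁻¹ A denotes the matrix obtained by subtracting λ from every entry of A. -/

import Mathlib

/-!
For a regular `x` with `μ = x⁻ A x` we have `A x ≤ μ x`, hence `Aᵐ x ≤ μᵐ x`; comparing diagonal
entries gives `tr Aᵐ ≤ μᵐ` for every `m`, i.e. `λ ≤ μ`. With `B = λ⁻¹ A`, the inequality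
`x⁻ A x ≤ λ` says exactly `B x ≤ x`. Every cycle of `B` has weight at most `𝟙`, so a walk of
length `m ≥ n` can be shortened by cutting out a closed subwalk without losing weight; hence
`Bᵐ ≤ B*` for all `m`, so `B B* ≤ B*` and every `x = B* u` satisfies `B x ≤ x`. Conversely
`B x ≤ x` gives `Bᵏ x ≤ x` for all `k`, so `B* x = x`. Finally `B* 𝟙 ≥ 𝟙` is regular, so the
minimum is attained.
-/

open Finset

noncomputable section

namespace MaxPlus

/-- Max-plus multiplicative inverse: `-a` for real `a`, `⊥` for `⊥`. -/
def tinv (a : WithBot ℝ) : WithBot ℝ := WithBot.map (fun r => -r) a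

/-- Max-plus rational power `a^(1/k) = a / k`. -/
def trt (a : WithBot ℝ) (k : ℕ) : WithBot ℝ := WithBot.map (fun r => r / (k : ℝ)) a

/-- A vector is regular if it has no `⊥` (= -∞) entries. -/
def Reg {n : ℕ} (x : Fin n → WithBot ℝ) : Prop := ∀ i, x i ≠ ⊥

/-- `cdot q x = q⁻ x`, the max-plus product of the conjugate row vector `q⁻` with `x`. -/
def cdot {n : ℕ} (q x : Fin n → WithBot ℝ) : WithBot ℝ :=
  Finset.univ.sup fun i => tinv (q i) + x i

/-- Max-plus matrix-vector product. -/
def mulVec {m n : ℕ} (A : Matrix (Fin m) (Fin n) (WithBot ℝ)) (x : Fin n → WithBot ℝ) :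
    Fin m → WithBot ℝ := fun i => Finset.univ.sup fun j => A i j + x j

/-- Max-plus matrix product. -/
def tmul {l m n : ℕ} (A : Matrix (Fin l) (Fin m) (WithBot ℝ))
    (B : Matrix (Fin m) (Fin n) (WithBot ℝ)) : Matrix (Fin l) (Fin n) (WithBot ℝ) :=
  fun i j => Finset.univ.sup fun k => A i k + B k j

/-- Multiplicative conjugate transpose of a matrix. -/
def conjM {m n : ℕ} (A : Matrix (Fin m) (Fin n) (WithBot ℝ)) :
    Matrix (Fin n) (Fin m) (WithBot ℝ) := fun i j => tinv (A j i)

/-- Max-plus identity matrix. -/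
def tId {n : ℕ} : Matrix (Fin n) (Fin n) (WithBot ℝ) := fun i j => if i = j then 0 else ⊥

/-- Max-plus matrix power. -/
def tpow {n : ℕ} (A : Matrix (Fin n) (Fin n) (WithBot ℝ)) : ℕ → Matrix (Fin n) (Fin n) (WithBot ℝ)
  | 0 => tId
  | k + 1 => tmul A (tpow A k)

/-- Max-plus trace. -/
def ttr {n : ℕ} (A : Matrix (Fin n) (Fin n) (WithBot ℝ)) : WithBot ℝ :=
  Finset.univ.sup fun i => A i i

/-- `Tr(A) = tr A ⊕ tr A² ⊕ ⋯ ⊕ tr Aⁿ`. -/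
def TrOp {n : ℕ} (A : Matrix (Fin n) (Fin n) (WithBot ℝ)) : WithBot ℝ :=
  (Finset.Icc 1 n).sup fun m => ttr (tpow A m)

/-- Kleene star `A* = I ⊕ A ⊕ ⋯ ⊕ A^(n-1)`. -/
def kstar {n : ℕ} (A : Matrix (Fin n) (Fin n) (WithBot ℝ)) : Matrix (Fin n) (Fin n) (WithBot ℝ) :=
  fun i j => (Finset.range n).sup fun k => tpow A k i j

/-- Max-plus spectral radius `λ = ⊕_{m=1}^n (tr A^m)^(1/m)`. -/
def specRad {n : ℕ} (A : Matrix (Fin n) (Fin n) (WithBot ℝ)) : WithBot ℝ :=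
  (Finset.Icc 1 n).sup fun m => trt (ttr (tpow A m)) m

/-- `prodAB A B [i₁, …, i_k] = A B^{i₁} A B^{i₂} ⋯ A B^{i_k}`. -/
def prodAB {n : ℕ} (A B : Matrix (Fin n) (Fin n) (WithBot ℝ)) :
    List ℕ → Matrix (Fin n) (Fin n) (WithBot ℝ)
  | [] => tId
  | i :: t => tmul (tmul A (tpow B i)) (prodAB A B t)

/-- The all-ones (all-`𝟙 = 0`) vector. -/
def onesV (n : ℕ) : Fin n → WithBot ℝ := fun _ => 0

end MaxPlus

open MaxPlus

namespace MaxPlus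

variable {n : ℕ}

lemma add_finset_sup {ι : Type*} (s : Finset ι) (f : ι → WithBot ℝ) (c : WithBot ℝ) :
    c + s.sup f = s.sup fun i => c + f i :=
  apply_sup_eq_sup_comp (c + ·) (fun _ _ => (max_add_add_left c _ _).symm) (WithBot.add_bot c)

lemma finset_sup_add {ι : Type*} (s : Finset ι) (f : ι → WithBot ℝ) (c : WithBot ℝ) :
    s.sup f + c = s.sup fun i => f i + c := by
  simpa only [add_comm c] using add_finset_sup s f c

lemma tinv_add_cancel {c : WithBot ℝ} (hc : c ≠ ⊥) : tinv c + c = 0 := by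
  lift c to ℝ using hc
  change ((-c : ℝ) : WithBot ℝ) + c = 0
  exact_mod_cast neg_add_cancel c

lemma tinv_add_le_iff {c : WithBot ℝ} (hc : c ≠ ⊥) (y z : WithBot ℝ) :
    tinv c + y ≤ z ↔ y ≤ c + z := by
  rw [← WithBot.add_le_add_iff_left hc, ← add_assoc, add_comm c, tinv_add_cancel hc, zero_add]

lemma cdot_le_iff {x : Fin n → WithBot ℝ} (hx : Reg x) (y : Fin n → WithBot ℝ) (c : WithBot ℝ) :
    cdot x y ≤ c ↔ ∀ i, y i ≤ c + x i := by
  simp only [cdot, Finset.sup_le_iff, Finset.mem_univ, true_implies, tinv_add_le_iff (hx _),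
    add_comm (x _)]

lemma mulVec_const_add (c : WithBot ℝ) (A : Matrix (Fin n) (Fin n) (WithBot ℝ))
    (x : Fin n → WithBot ℝ) (i : Fin n) :
    mulVec (fun i j => c + A i j) x i = c + mulVec A x i := by
  simp only [mulVec, add_finset_sup, add_assoc]

lemma mulVec_add_const (A : Matrix (Fin n) (Fin n) (WithBot ℝ)) (c : WithBot ℝ)
    (x : Fin n → WithBot ℝ) (i : Fin n) :
    mulVec A (fun j => c + x j) i = c + mulVec A x i := by
  simp only [mulVec, add_finset_sup, add_left_comm c]

lemma mulVec_tmul (A B : Matrix (Fin n) (Fin n) (WithBot ℝ)) (u : Fin n → WithBot ℝ) :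
    mulVec (tmul A B) u = mulVec A (mulVec B u) := by
  funext i
  simp only [tmul, mulVec, finset_sup_add, add_finset_sup, add_assoc]
  exact Finset.sup_comm _ _ _

lemma mulVec_tId (x : Fin n → WithBot ℝ) : mulVec tId x = x := by
  funext i
  refine le_antisymm (Finset.sup_le fun j _ => ?_) ?_
  · by_cases h : i = j <;> simp [tId, h]
  · calc x i = tId i i + x i := by simp [tId]
      _ ≤ mulVec tId x i := Finset.le_sup (f := fun j => tId i j + x j) (Finset.mem_univ i)

lemma mulVec_mono_right (A : Matrix (Fin n) (Fin n) (WithBot ℝ)) {x y : Fin n → WithBot ℝ}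
    (h : ∀ j, x j ≤ y j) (i : Fin n) : mulVec A x i ≤ mulVec A y i :=
  Finset.sup_mono_fun fun j _ => add_le_add_right (h j) _

lemma mulVec_mono_left {A B : Matrix (Fin n) (Fin n) (WithBot ℝ)} (h : ∀ i j, A i j ≤ B i j)
    (x : Fin n → WithBot ℝ) (i : Fin n) : mulVec A x i ≤ mulVec B x i :=
  Finset.sup_mono_fun fun j _ => add_le_add_left (h i j) _

lemma mulVec_tpow_le {A : Matrix (Fin n) (Fin n) (WithBot ℝ)} {x : Fin n → WithBot ℝ}
    {c : WithBot ℝ} (h : ∀ i, mulVec A x i ≤ c + x i) (m : ℕ) (i : Fin n) :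
    mulVec (tpow A m) x i ≤ m • c + x i := by
  induction m generalizing i with
  | zero => simp [tpow, mulVec_tId]
  | succ m ih =>
    calc mulVec (tpow A (m + 1)) x i = mulVec A (mulVec (tpow A m) x) i := by
          rw [tpow, mulVec_tmul]
      _ ≤ mulVec A (fun j => m • c + x j) i := mulVec_mono_right A ih i
      _ = m • c + mulVec A x i := mulVec_add_const A _ x i
      _ ≤ m • c + (c + x i) := add_le_add_right (h i) _
      _ = (m + 1) • c + x i := by rw [succ_nsmul, add_assoc]

lemma tpow_const_add (c : WithBot ℝ) (A : Matrix (Fin n) (Fin n) (WithBot ℝ)) (m : ℕ) :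
    tpow (fun i j => c + A i j) m = fun i j => m • c + tpow A m i j := by
  induction m with
  | zero => simp [tpow]
  | succ m ih =>
    funext i j
    simp only [tpow, tmul, ih, add_finset_sup, succ_nsmul]
    exact Finset.sup_congr rfl fun k _ => by abel

lemma ttr_tpow_const_add (c : WithBot ℝ) (A : Matrix (Fin n) (Fin n) (WithBot ℝ)) (m : ℕ) :
    ttr (tpow (fun i j => c + A i j) m) = m • c + ttr (tpow A m) := by
  simp only [tpow_const_add, ttr, add_finset_sup]

lemma trt_le_iff {m : ℕ} (hm : m ≠ 0) (t c : WithBot ℝ) : trt t m ≤ c ↔ t ≤ m • c := by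
  induction t using WithBot.recBotCoe with
  | bot => simp [trt]
  | coe a =>
    induction c using WithBot.recBotCoe with
    | bot =>
      obtain ⟨k, rfl⟩ := Nat.exists_eq_succ_of_ne_zero hm
      simp [trt, succ_nsmul]
    | coe b =>
      have hm' : (0 : ℝ) < m := by positivity
      simp only [trt, WithBot.map_coe, ← WithBot.coe_nsmul, WithBot.coe_le_coe, nsmul_eq_mul]
      rw [div_le_iff₀ hm', mul_comm]

lemma specRad_le_iff (A : Matrix (Fin n) (Fin n) (WithBot ℝ)) (c : WithBot ℝ) :
    specRad A ≤ c ↔ ∀ m ∈ Finset.Icc 1 n, ttr (tpow A m) ≤ m • c := by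
  rw [specRad, Finset.sup_le_iff]
  refine forall₂_congr fun m hm => trt_le_iff ?_ _ _
  exact (Nat.one_le_iff_ne_zero.1 (Finset.mem_Icc.1 hm).1)

lemma specRad_le_cdot (A : Matrix (Fin n) (Fin n) (WithBot ℝ)) {x : Fin n → WithBot ℝ}
    (hx : Reg x) : specRad A ≤ cdot x (mulVec A x) := by
  have hAx := (cdot_le_iff hx (mulVec A x) _).1 le_rfl
  refine (specRad_le_iff A _).2 fun m _ => Finset.sup_le fun i _ => ?_
  rw [← WithBot.add_le_add_iff_right (hx i)]
  exact (Finset.le_sup (f := fun j => tpow A m i j + x j) (Finset.mem_univ i)).trans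
    (mulVec_tpow_le hAx m i)

def walkWeight (B : Matrix (Fin n) (Fin n) (WithBot ℝ)) (p : ℕ → Fin n) (m : ℕ) : WithBot ℝ :=
  ∑ k ∈ Finset.range m, B (p k) (p (k + 1))

lemma walkWeight_add (B : Matrix (Fin n) (Fin n) (WithBot ℝ)) (p : ℕ → Fin n) (a b : ℕ) :
    walkWeight B p (a + b) = walkWeight B p a + walkWeight B (fun t => p (a + t)) b := by
  simp only [walkWeight, Finset.sum_range_add, add_assoc]

lemma walkWeight_succ (B : Matrix (Fin n) (Fin n) (WithBot ℝ)) (p : ℕ → Fin n) (m : ℕ) :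
    walkWeight B p (m + 1) = B (p 0) (p 1) + walkWeight B (fun t => p (t + 1)) m := by
  rw [walkWeight, Finset.sum_range_succ', add_comm]
  rfl

lemma walkWeight_le_tpow (B : Matrix (Fin n) (Fin n) (WithBot ℝ)) (m : ℕ) (p : ℕ → Fin n) :
    walkWeight B p m ≤ tpow B m (p 0) (p m) := by
  induction m generalizing p with
  | zero => simp [walkWeight, tpow, tId]
  | succ m ih =>
    rw [walkWeight_succ]
    exact (add_le_add_right (ih _) _).trans
      (Finset.le_sup (f := fun k => B (p 0) k + tpow B m k (p (m + 1))) (Finset.mem_univ (p 1)))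

lemma exists_walkWeight_eq_tpow (B : Matrix (Fin n) (Fin n) (WithBot ℝ)) (m : ℕ) (i j : Fin n)
    (h : tpow B m i j ≠ ⊥) :
    ∃ p : ℕ → Fin n, p 0 = i ∧ p m = j ∧ walkWeight B p m = tpow B m i j := by
  induction m generalizing i with
  | zero =>
    have hij : i = j := by by_contra hij; simp [tpow, tId, hij] at h
    exact ⟨fun _ => i, rfl, hij, by simp [walkWeight, tpow, tId, hij]⟩
  | succ m ih =>
    obtain ⟨k, -, hk⟩ := Finset.exists_mem_eq_sup Finset.univ ⟨i, Finset.mem_univ i⟩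
      (fun k => B i k + tpow B m k j)
    change Finset.univ.sup _ = _ at hk
    rw [tpow, tmul, hk] at h ⊢
    obtain ⟨q, hq0, hqm, hqw⟩ := ih k (WithBot.add_ne_bot.1 h).2
    refine ⟨fun t => Nat.casesOn t i q, rfl, hqm, ?_⟩
    rw [walkWeight_succ, ← hqw, ← hq0]
    rfl

lemma exists_lt_le_apply_eq (p : ℕ → Fin n) : ∃ a b, a < b ∧ b ≤ n ∧ p a = p b := by
  obtain ⟨a, b, hne, hab⟩ :=
    Fintype.exists_ne_map_eq_of_card_lt (fun t : Fin (n + 1) => p t) (by simp)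
  rcases lt_or_gt_of_ne (Fin.val_ne_of_ne hne) with h | h
  · exact ⟨a, b, h, Nat.lt_succ_iff.1 b.2, hab⟩
  · exact ⟨b, a, h, Nat.lt_succ_iff.1 a.2, hab.symm⟩

lemma walkWeight_le_zero_of_closed {B : Matrix (Fin n) (Fin n) (WithBot ℝ)} (hB : specRad B ≤ 0)
    (p : ℕ → Fin n) {m : ℕ} (hm : m ∈ Finset.Icc 1 n) (hp : p 0 = p m) :
    walkWeight B p m ≤ 0 := by
  calc walkWeight B p m ≤ tpow B m (p 0) (p m) := walkWeight_le_tpow B m p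
    _ ≤ ttr (tpow B m) := hp ▸ Finset.le_sup (f := fun i => tpow B m i i) (Finset.mem_univ _)
    _ ≤ m • 0 := (specRad_le_iff B 0).1 hB m hm
    _ = 0 := nsmul_zero m

lemma walkWeight_le_tpow_of_cycle_le_zero (B : Matrix (Fin n) (Fin n) (WithBot ℝ))
    (p : ℕ → Fin n) {a b m : ℕ} (hab : a ≤ b) (hbm : b ≤ m) (hp : p a = p b)
    (hcycle : walkWeight B (fun t => p (a + t)) (b - a) ≤ 0) :
    walkWeight B p m ≤ tpow B (a + (m - b)) (p 0) (p m) := by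
  -- `q` follows `p` up to time `a` and then skips the closed subwalk from `p a` to `p b`.
  set q : ℕ → Fin n := fun t => if t ≤ a then p t else p (t + (b - a))
  have hq_le : ∀ t ≤ a, q t = p t := fun t ht => if_pos ht
  have hq_add : ∀ t, q (a + t) = p (b + t) := by
    rintro (_ | t)
    · simp [q, hp]
    · simp only [q, if_neg (by omega : ¬ a + (t + 1) ≤ a)]
      congr 1
      omega
  have hp_split : walkWeight B p m = walkWeight B p a + walkWeight B (fun t => p (a + t)) (b - a)
      + walkWeight B (fun t => p (b + t)) (m - b) := by
    conv_lhs => rw [show m = a + ((b - a) + (m - b)) by omega]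
    rw [walkWeight_add, walkWeight_add, add_assoc]
    congr 3
    funext t
    congr 1
    omega
  have hq_split : walkWeight B q (a + (m - b))
      = walkWeight B p a + walkWeight B (fun t => p (b + t)) (m - b) := by
    rw [walkWeight_add]
    congr 1
    · refine Finset.sum_congr rfl fun k hk => ?_
      have hka := Finset.mem_range.1 hk
      rw [hq_le k hka.le, hq_le (k + 1) hka]
    · simp only [hq_add]
  calc walkWeight B p m
      ≤ walkWeight B p a + 0 + walkWeight B (fun t => p (b + t)) (m - b) := by
        rw [hp_split]
        gcongr
    _ = walkWeight B q (a + (m - b)) := by rw [add_zero, hq_split]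
    _ ≤ tpow B (a + (m - b)) (q 0) (q (a + (m - b))) := walkWeight_le_tpow B _ q
    _ = tpow B (a + (m - b)) (p 0) (p m) := by
        rw [hq_le 0 (Nat.zero_le a), hq_add, Nat.add_sub_cancel' hbm]

lemma tpow_le_kstar {B : Matrix (Fin n) (Fin n) (WithBot ℝ)} (hB : specRad B ≤ 0) (m : ℕ)
    (i j : Fin n) : tpow B m i j ≤ kstar B i j := by
  induction m using Nat.strong_induction_on generalizing i j with
  | _ m ih =>
    rcases lt_or_ge m n with hmn | hnm
    · exact Finset.le_sup (f := fun k => tpow B k i j) (Finset.mem_range.2 hmn)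
    by_cases hbot : tpow B m i j = ⊥
    · simp [hbot]
    obtain ⟨p, rfl, rfl, hpw⟩ := exists_walkWeight_eq_tpow B m i j hbot
    obtain ⟨a, b, hab, hbn, hp⟩ := exists_lt_le_apply_eq p
    have hcycle : walkWeight B (fun t => p (a + t)) (b - a) ≤ 0 :=
      walkWeight_le_zero_of_closed hB _ (Finset.mem_Icc.2 ⟨by omega, by omega⟩)
        (by simp only [add_zero, Nat.add_sub_cancel' hab.le, hp])
    rw [← hpw]
    exact (walkWeight_le_tpow_of_cycle_le_zero B p hab.le (hbn.trans hnm) hp hcycle).trans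
      (ih _ (by omega) _ _)

lemma tmul_kstar_le {B : Matrix (Fin n) (Fin n) (WithBot ℝ)} (hB : specRad B ≤ 0) (i j : Fin n) :
    tmul B (kstar B) i j ≤ kstar B i j := by
  refine Finset.sup_le fun k _ => ?_
  rw [kstar, add_finset_sup]
  exact Finset.sup_le fun t _ =>
    (Finset.le_sup (f := fun k => B i k + tpow B t k j) (Finset.mem_univ k)).trans
      (tpow_le_kstar hB (t + 1) i j)

lemma mulVec_mulVec_kstar_le {B : Matrix (Fin n) (Fin n) (WithBot ℝ)} (hB : specRad B ≤ 0)
    (u : Fin n → WithBot ℝ) (i : Fin n) :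
    mulVec B (mulVec (kstar B) u) i ≤ mulVec (kstar B) u i := by
  rw [← mulVec_tmul]
  exact mulVec_mono_left (tmul_kstar_le hB) u i

lemma mulVec_kstar_apply (B : Matrix (Fin n) (Fin n) (WithBot ℝ)) (x : Fin n → WithBot ℝ)
    (i : Fin n) : mulVec (kstar B) x i = (Finset.range n).sup fun k => mulVec (tpow B k) x i := by
  simp only [mulVec, kstar, finset_sup_add]
  exact Finset.sup_comm _ _ _

lemma le_mulVec_kstar (B : Matrix (Fin n) (Fin n) (WithBot ℝ)) (x : Fin n → WithBot ℝ)
    (i : Fin n) : x i ≤ mulVec (kstar B) x i := by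
  rw [mulVec_kstar_apply]
  calc x i = mulVec (tpow B 0) x i := by rw [tpow, mulVec_tId]
    _ ≤ _ := Finset.le_sup (f := fun k => mulVec (tpow B k) x i)
        (Finset.mem_range.2 (Nat.zero_lt_of_lt i.2))

lemma mulVec_kstar_eq_self {B : Matrix (Fin n) (Fin n) (WithBot ℝ)} {x : Fin n → WithBot ℝ}
    (hBx : ∀ i, mulVec B x i ≤ x i) : mulVec (kstar B) x = x := by
  funext i
  refine le_antisymm ?_ (le_mulVec_kstar B x i)
  rw [mulVec_kstar_apply]
  refine Finset.sup_le fun k _ => ?_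
  simpa using mulVec_tpow_le (c := 0) (by simpa using hBx) k i

lemma reg_mulVec_kstar_onesV (B : Matrix (Fin n) (Fin n) (WithBot ℝ)) :
    Reg (mulVec (kstar B) (onesV n)) := fun i =>
  ne_bot_of_le_ne_bot WithBot.coe_ne_bot (le_mulVec_kstar B (onesV n) i)

lemma cdot_mulVec_le_iff {c : WithBot ℝ} (hc : c ≠ ⊥) (A : Matrix (Fin n) (Fin n) (WithBot ℝ))
    {x : Fin n → WithBot ℝ} (hx : Reg x) :
    cdot x (mulVec A x) ≤ c ↔ ∀ i, mulVec (fun i j => tinv c + A i j) x i ≤ x i := by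
  simp only [cdot_le_iff hx, mulVec_const_add, tinv_add_le_iff hc]

lemma specRad_tinv_add_le_zero (A : Matrix (Fin n) (Fin n) (WithBot ℝ)) (hA : specRad A ≠ ⊥) :
    specRad (fun i j => tinv (specRad A) + A i j) ≤ 0 := by
  refine (specRad_le_iff _ 0).2 fun m hm => ?_
  rw [ttr_tpow_const_add, ← tinv_add_cancel hA, nsmul_add]
  exact add_le_add_right ((specRad_le_iff A _).1 le_rfl m hm) _

end MaxPlus

/-- extremal property of the spectral radius. -/
theorem stmt_10 {n : ℕ} (A : Matrix (Fin n) (Fin n) (WithBot ℝ))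
    (hlam : ⊥ < specRad A) :
    IsLeast {v | ∃ x : Fin n → WithBot ℝ, Reg x ∧ cdot x (mulVec A x) = v} (specRad A) ∧
      ∀ x : Fin n → WithBot ℝ, Reg x →
        (cdot x (mulVec A x) = specRad A ↔
          ∃ u : Fin n → WithBot ℝ,
            x = mulVec (kstar fun i j => tinv (specRad A) + A i j) u) := by
  have hA : specRad A ≠ ⊥ := hlam.ne'
  set B : Matrix (Fin n) (Fin n) (WithBot ℝ) := fun i j => tinv (specRad A) + A i j
  have hB : specRad B ≤ 0 := specRad_tinv_add_le_zero A hA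
  have hstar : ∀ u, Reg (mulVec (kstar B) u) →
      cdot (mulVec (kstar B) u) (mulVec A (mulVec (kstar B) u)) = specRad A :=
    fun u hx => le_antisymm ((cdot_mulVec_le_iff hA A hx).2 (mulVec_mulVec_kstar_le hB u))
      (specRad_le_cdot A hx)
  refine ⟨⟨⟨_, reg_mulVec_kstar_onesV _, hstar _ (reg_mulVec_kstar_onesV _)⟩, ?_⟩,
    fun x hx => ⟨fun h => ?_, ?_⟩⟩
  · rintro _ ⟨x, hx, rfl⟩
    exact specRad_le_cdot A hx
  · exact ⟨x, (mulVec_kstar_eq_self ((cdot_mulVec_le_iff hA A hx).1 h.le)).symm⟩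
  · rintro ⟨u, rfl⟩
    exact hstar u hx
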